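/- Let d ≥ 1, β > 0 and let U = V + g satisfy assumptions (A0) and (A1). Then for every a ∈ ℝ^{2d} and all indices i, j in {1,…,2d}: C₁²·Var_{ν_a}(id) ≤ Cov_{ν_a}( V'(a_i − ·), V'(a_j − ·) ) ≤ C₂²·Var_{ν_a}(id). -/

import Mathlib

/-!
Write `φ = V'(a_i - ·)` and `ψ = V'(a_j - ·)`. For two independent samples `s, t` of `ν_a`,
`2 Cov(φ, ψ) = E[(φ s - φ t) (ψ s - ψ t)]` and `2 Var(id) = E[(s - t)²]`. Since
`C₁ ≤ V'' ≤ C₂`, both increments `φ s - φ t` and `ψ s - ψ t` have the sign of `t - s` and size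
between `C₁ |s - t|` and `C₂ |s - t|`, so their product lies between `C₁² (s - t)²` and
`C₂² (s - t)²`; integrating gives the claim. By (A0) the density of `ν_a` has a Gaussian tail,
so `ν_a` has a second moment and every Lipschitz function, such as `φ` and `ψ`, is in `L²(ν_a)`.
-/

open MeasureTheory Real Filter

noncomputable section

/-- Boltzmann weight of the single odd site given the `2d` neighbouring values `a`. -/
def siteWeight (β : ℝ) (d : ℕ) (U : ℝ → ℝ) (a : Fin (2*d) → ℝ) (t : ℝ) : ℝ :=
  Real.exp (-(2*β) * ∑ k, U (a k - t))

/-- Normalising constant `Z_a`. -/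
def Zsite (β : ℝ) (d : ℕ) (U : ℝ → ℝ) (a : Fin (2*d) → ℝ) : ℝ :=
  ∫ t : ℝ, siteWeight β d U a t

/-- Single-site measure `ν_a`. -/
def nuSite (β : ℝ) (d : ℕ) (U : ℝ → ℝ) (a : Fin (2*d) → ℝ) : Measure ℝ :=
  volume.withDensity fun t => ENNReal.ofReal (siteWeight β d U a t / Zsite β d U a)

/-- Coarse-grained potential `F(a) = -log Z_a`. -/
def Fcg (β : ℝ) (d : ℕ) (U : ℝ → ℝ) (a : Fin (2*d) → ℝ) : ℝ :=
  - Real.log (Zsite β d U a)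

/-- Covariance of two functions under a measure on `ℝ`. -/
def covM (ν : Measure ℝ) (f g : ℝ → ℝ) : ℝ :=
  (∫ t, f t * g t ∂ν) - (∫ t, f t ∂ν) * (∫ t, g t ∂ν)

/-- Variance of the identity function under a measure on `ℝ`. -/
def varId (ν : Measure ℝ) : ℝ := covM ν (fun t => t) (fun t => t)

/-- First partial derivative. -/
def pd {n : ℕ} (Φ : (Fin n → ℝ) → ℝ) (i : Fin n) (a : Fin n → ℝ) : ℝ :=
  fderiv ℝ Φ a (Pi.single i 1)

/-- Second partial derivative. -/
def pd2 {n : ℕ} (Φ : (Fin n → ℝ) → ℝ) (i j : Fin n) (a : Fin n → ℝ) : ℝ :=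
  fderiv ℝ (fun x => fderiv ℝ Φ x (Pi.single i 1)) a (Pi.single j 1)

section Covariance

variable {ν : Measure ℝ} [IsProbabilityMeasure ν] {f g : ℝ → ℝ}

lemma integrable_prod_sub_mul_sub (hf : MemLp f 2 ν) (hg : MemLp g 2 ν) :
    Integrable (fun z : ℝ × ℝ => (f z.1 - f z.2) * (g z.1 - g z.2)) (ν.prod ν) := by
  have hfg : Integrable (fun t => f t * g t) ν := hf.integrable_mul hg
  have hf₁ := hf.integrable one_le_two
  have hg₁ := hg.integrable one_le_two
  have := (((hfg.comp_fst ν).sub (hf₁.mul_prod hg₁)).sub (hg₁.mul_prod hf₁)).add (hfg.comp_snd ν)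
  refine this.congr (ae_of_all _ fun z => ?_)
  simp only [Pi.add_apply, Pi.sub_apply]
  ring

lemma integral_prod_sub_mul_sub (hf : MemLp f 2 ν) (hg : MemLp g 2 ν) :
    ∫ z, (f z.1 - f z.2) * (g z.1 - g z.2) ∂(ν.prod ν) = 2 * covM ν f g := by
  have hfg : Integrable (fun t => f t * g t) ν := hf.integrable_mul hg
  have hf₁ := hf.integrable one_le_two
  have hg₁ := hg.integrable one_le_two
  have h₁ := hfg.comp_fst ν
  have h₂ := hf₁.mul_prod hg₁
  have h₃ := hg₁.mul_prod hf₁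
  have h₄ := hfg.comp_snd ν
  calc ∫ z, (f z.1 - f z.2) * (g z.1 - g z.2) ∂(ν.prod ν)
      = ∫ z, (f z.1 * g z.1 - f z.1 * g z.2 - g z.1 * f z.2 + f z.2 * g z.2) ∂(ν.prod ν) := by
        congr 1; ext z; ring
    _ = 2 * covM ν f g := by
        rw [integral_add (by exact (h₁.sub h₂).sub h₃) h₄, integral_sub (by exact h₁.sub h₂) h₃,
          integral_sub h₁ h₂, integral_fun_fst (fun t => f t * g t),
          integral_fun_snd (fun t => f t * g t), integral_prod_mul,
          integral_prod_mul, covM]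
        simp only [probReal_univ, one_smul]
        ring

lemma covM_le_covM_of_increments {f₁ g₁ f₂ g₂ : ℝ → ℝ} (hf₁ : MemLp f₁ 2 ν)
    (hg₁ : MemLp g₁ 2 ν) (hf₂ : MemLp f₂ 2 ν) (hg₂ : MemLp g₂ 2 ν)
    (h : ∀ s t, (f₁ s - f₁ t) * (g₁ s - g₁ t) ≤ (f₂ s - f₂ t) * (g₂ s - g₂ t)) :
    covM ν f₁ g₁ ≤ covM ν f₂ g₂ := by
  have := integral_mono (integrable_prod_sub_mul_sub hf₁ hg₁)
    (integrable_prod_sub_mul_sub hf₂ hg₂) fun z => h z.1 z.2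
  rw [integral_prod_sub_mul_sub hf₁ hg₁, integral_prod_sub_mul_sub hf₂ hg₂] at this
  linarith

lemma covM_const_mul_id (ν : Measure ℝ) (c : ℝ) :
    covM ν (fun t => c * t) (fun t => c * t) = c ^ 2 * varId ν := by
  have hsq : ∀ t, c * t * (c * t) = c ^ 2 * (t * t) := fun t => by ring
  simp only [varId, covM, hsq, integral_const_mul, integral_const_mul c (fun t : ℝ => t)]
  ring

end Covariance

lemma LipschitzWith.memLp_of_memLp_id {E F : Type*} [NormedAddCommGroup E] [MeasurableSpace E]
    [NormedAddCommGroup F] {μ : Measure E} [IsFiniteMeasure μ] {p : ENNReal} {K : NNReal}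
    {φ : E → F} (hφ : LipschitzWith K φ) (hid : MemLp id p μ) : MemLp φ p μ := by
  have h₀ : MemLp ((fun x => φ x - φ 0) ∘ id) p μ :=
    (hφ.sub (LipschitzWith.const (φ 0))).comp_memLp (sub_self _) hid
  convert h₀.add (memLp_const (φ 0)) using 1
  ext x
  simp

lemma mul_mem_Icc_of_mem_Icc {C₁ C₂ δ p q : ℝ} (hC₁ : 0 ≤ C₁) (hδ : 0 ≤ δ)
    (hp : p ∈ Set.Icc (C₁ * δ) (C₂ * δ)) (hq : q ∈ Set.Icc (C₁ * δ) (C₂ * δ)) :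
    p * q ∈ Set.Icc (C₁ ^ 2 * δ ^ 2) (C₂ ^ 2 * δ ^ 2) := by
  have hCδ : 0 ≤ C₁ * δ := mul_nonneg hC₁ hδ
  constructor
  · nlinarith [mul_le_mul hp.1 hq.1 hCδ (hCδ.trans hp.1)]
  · nlinarith [mul_le_mul hp.2 hq.2 (hCδ.trans hq.1) ((hCδ.trans hp.1).trans hp.2)]

lemma mul_increments_mem_Icc {f : ℝ → ℝ} {C₁ C₂ : ℝ} (hC₁ : 0 ≤ C₁)
    (hf : ∀ x y, x ≤ y → f y - f x ∈ Set.Icc (C₁ * (y - x)) (C₂ * (y - x))) (b c s t : ℝ) :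
    (f (b - s) - f (b - t)) * (f (c - s) - f (c - t)) ∈
      Set.Icc (C₁ ^ 2 * (s - t) ^ 2) (C₂ ^ 2 * (s - t) ^ 2) := by
  rcases le_total s t with hst | hts
  · have hb := hf (b - t) (b - s) (by linarith)
    have hc := hf (c - t) (c - s) (by linarith)
    simp only [sub_sub_sub_cancel_left] at hb hc
    rw [← neg_sub t s, neg_sq]
    exact mul_mem_Icc_of_mem_Icc hC₁ (sub_nonneg.2 hst) hb hc
  · have hb := hf (b - s) (b - t) (by linarith)
    have hc := hf (c - s) (c - t) (by linarith)
    simp only [sub_sub_sub_cancel_left] at hb hc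
    rw [← neg_sub (f (b - t)), ← neg_sub (f (c - t)), neg_mul_neg]
    exact mul_mem_Icc_of_mem_Icc hC₁ (sub_nonneg.2 hts) hb hc

section SiteMeasure

variable {d : ℕ} {β A B : ℝ} {U : ℝ → ℝ} {a : Fin (2 * d) → ℝ}

lemma nuSite_eq_tilted :
    nuSite β d U a = volume.tilted fun t => -(2 * β) * ∑ k, U (a k - t) := rfl

lemma continuous_siteWeight (hU : Continuous U) : Continuous (siteWeight β d U a) := by
  unfold siteWeight
  fun_prop

lemma siteWeight_le_gaussian (hβ : 0 < β) (hA : 0 < A) (hA0 : ∀ η : ℝ, A * η ^ 2 - B ≤ U η)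
    (k : Fin (2 * d)) (t : ℝ) :
    siteWeight β d U a t ≤ exp (2 * β * (2 * d * B + A * a k ^ 2)) * exp (-(β * A) * t ^ 2) := by
  have hsq : t ^ 2 / 2 - a k ^ 2 ≤ ∑ j, (a j - t) ^ 2 :=
    calc t ^ 2 / 2 - a k ^ 2 ≤ (a k - t) ^ 2 := by nlinarith [sq_nonneg (t - 2 * a k)]
      _ ≤ ∑ j, (a j - t) ^ 2 :=
        Finset.single_le_sum (f := fun j => (a j - t) ^ 2) (fun j _ => sq_nonneg _)
          (Finset.mem_univ k)
  have hU : A * (t ^ 2 / 2 - a k ^ 2) - 2 * d * B ≤ ∑ j, U (a j - t) :=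
    calc A * (t ^ 2 / 2 - a k ^ 2) - 2 * d * B ≤ A * ∑ j, (a j - t) ^ 2 - 2 * d * B := by
          gcongr
      _ = ∑ j, (A * (a j - t) ^ 2 - B) := by
          simp [Finset.sum_sub_distrib, Finset.mul_sum]
      _ ≤ ∑ j, U (a j - t) := Finset.sum_le_sum fun j _ => hA0 _
  rw [siteWeight, ← exp_add]
  exact exp_le_exp.2 (by nlinarith)

lemma integrable_mul_pow_of_le_gaussian {w : ℝ → ℝ} (hw : Continuous w) (hw₀ : ∀ t, 0 ≤ w t)
    {K b : ℝ} (hb : 0 < b) (hwK : ∀ t, w t ≤ K * exp (-b * t ^ 2)) (n : ℕ) :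
    Integrable fun t => w t * t ^ n := by
  have hK : 0 ≤ K := by simpa using (hw₀ 0).trans (hwK 0)
  have hdom : Integrable fun t : ℝ => K * (t ^ n * exp (-b * t ^ 2)) := by
    have := integrable_rpow_mul_exp_neg_mul_sq hb (s := n) (by linarith [n.cast_nonneg (α := ℝ)])
    simpa only [rpow_natCast] using this.const_mul K
  refine hdom.mono (hw.mul (continuous_pow n)).aestronglyMeasurable
    (ae_of_all _ fun t => ?_)
  simp only [norm_mul, Real.norm_eq_abs, abs_of_nonneg (hw₀ t), abs_of_nonneg hK,
    abs_of_pos (exp_pos _)]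
  linear_combination mul_le_mul_of_nonneg_right (hwK t) (abs_nonneg (t ^ n))

lemma integrable_siteWeight_mul_pow (hd : 1 ≤ d) (hβ : 0 < β) (hU : Continuous U) (hA : 0 < A)
    (hA0 : ∀ η : ℝ, A * η ^ 2 - B ≤ U η) (n : ℕ) :
    Integrable fun t => siteWeight β d U a t * t ^ n :=
  integrable_mul_pow_of_le_gaussian (continuous_siteWeight hU) (fun _ => (exp_pos _).le)
    (mul_pos hβ hA) (siteWeight_le_gaussian hβ hA hA0 ⟨0, by omega⟩) n

lemma integrable_siteWeight (hd : 1 ≤ d) (hβ : 0 < β) (hU : Continuous U) (hA : 0 < A)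
    (hA0 : ∀ η : ℝ, A * η ^ 2 - B ≤ U η) : Integrable (siteWeight β d U a) := by
  simpa using integrable_siteWeight_mul_pow hd hβ hU hA hA0 0

lemma isProbabilityMeasure_nuSite (hd : 1 ≤ d) (hβ : 0 < β) (hU : Continuous U) (hA : 0 < A)
    (hA0 : ∀ η : ℝ, A * η ^ 2 - B ≤ U η) : IsProbabilityMeasure (nuSite β d U a) :=
  isProbabilityMeasure_tilted (integrable_siteWeight hd hβ hU hA hA0)

lemma memLp_id_nuSite (hd : 1 ≤ d) (hβ : 0 < β) (hU : Continuous U) (hA : 0 < A)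
    (hA0 : ∀ η : ℝ, A * η ^ 2 - B ≤ U η) : MemLp id 2 (nuSite β d U a) := by
  rw [memLp_two_iff_integrable_sq aestronglyMeasurable_id, nuSite_eq_tilted,
    integrable_tilted_iff (integrable_siteWeight hd hβ hU hA hA0)]
  exact integrable_siteWeight_mul_pow hd hβ hU hA hA0 2

end SiteMeasure

theorem statement12_general
    {d : ℕ} {β A B C₁ C₂ : ℝ} {U V : ℝ → ℝ}
    (hd : 1 ≤ d) (hβ : 0 < β)
    -- (A0)
    (hUcont : Continuous U) (hA : 0 < A) (hA0 : ∀ η : ℝ, A * η ^ 2 - B ≤ U η)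
    -- (A1)
    (hV : ContDiff ℝ 2 V)
    (hC₁ : 0 < C₁)
    (hV'' : ∀ s, C₁ ≤ deriv (deriv V) s ∧ deriv (deriv V) s ≤ C₂) :
    ∀ (a : Fin (2*d) → ℝ) (i j : Fin (2*d)),
      C₁^2 * varId (nuSite β d U a)
          ≤ covM (nuSite β d U a)
              (fun t => deriv V (a i - t)) (fun t => deriv V (a j - t)) ∧
      covM (nuSite β d U a)
              (fun t => deriv V (a i - t)) (fun t => deriv V (a j - t))
          ≤ C₂^2 * varId (nuSite β d U a) := by
  intro a i j
  have := isProbabilityMeasure_nuSite (a := a) hd hβ hUcont hA hA0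
  have hid := memLp_id_nuSite (a := a) hd hβ hUcont hA hA0
  have hV' : Differentiable ℝ (deriv V) :=
    (contDiff_succ_iff_deriv.1 hV).2.2.differentiable one_ne_zero
  have hslope : ∀ x y, x ≤ y → deriv V y - deriv V x ∈ Set.Icc (C₁ * (y - x)) (C₂ * (y - x)) :=
    fun x y hxy => ⟨mul_sub_le_image_sub_of_le_deriv hV' (fun s => (hV'' s).1) hxy,
      image_sub_le_mul_sub_of_deriv_le hV' (fun s => (hV'' s).2) hxy⟩
  have hlip : LipschitzWith C₂.toNNReal (deriv V) := by
    refine lipschitzWith_of_nnnorm_deriv_le hV' fun s => ?_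
    rw [← NNReal.coe_le_coe, coe_nnnorm, Real.norm_eq_abs,
      abs_of_pos (hC₁.trans_le (hV'' s).1)]
    exact (hV'' s).2.trans (le_max_left _ _)
  have hmemLp : ∀ c, MemLp (fun t => deriv V (c - t)) 2 (nuSite β d U a) := fun c =>
    (hlip.comp (IsometryEquiv.subLeft c).isometry.lipschitz).memLp_of_memLp_id hid
  have hincr := mul_increments_mem_Icc hC₁.le hslope (a i) (a j)
  constructor
  · rw [← covM_const_mul_id]
    refine covM_le_covM_of_increments (hid.const_mul C₁) (hid.const_mul C₁) (hmemLp _) (hmemLp _)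
      fun s t => ?_
    linear_combination (hincr s t).1
  · rw [← covM_const_mul_id]
    refine covM_le_covM_of_increments (hmemLp _) (hmemLp _) (hid.const_mul C₂) (hid.const_mul C₂)
      fun s t => ?_
    linear_combination (hincr s t).2

/-- **Statement 12** (bounds on the `V'-V'` covariance in terms of the variance). -/
theorem statement12
    {d : ℕ} {β A B C₀ C₁ C₂ : ℝ} {U V g : ℝ → ℝ}
    (hd : 1 ≤ d) (hβ : 0 < β)
    -- (A0)
    (hUcont : Continuous U) (hA : 0 < A) (hA0 : ∀ η : ℝ, A * η ^ 2 - B ≤ U η)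
    -- (A1)
    (hsum : ∀ s, U s = V s + g s)
    (hV : ContDiff ℝ 2 V) (hg : ContDiff ℝ 2 g)
    (hC₁ : 0 < C₁) (hC₁₂ : C₁ < C₂) (hC₂₀ : C₂ < C₀)
    (hV'' : ∀ s, C₁ ≤ deriv (deriv V) s ∧ deriv (deriv V) s ≤ C₂)
    (hg'' : ∀ s, -C₀ ≤ deriv (deriv g) s ∧ deriv (deriv g) s ≤ 0) :
    ∀ (a : Fin (2*d) → ℝ) (i j : Fin (2*d)),
      C₁^2 * varId (nuSite β d U a)
          ≤ covM (nuSite β d U a)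
              (fun t => deriv V (a i - t)) (fun t => deriv V (a j - t)) ∧
      covM (nuSite β d U a)
              (fun t => deriv V (a i - t)) (fun t => deriv V (a j - t))
          ≤ C₂^2 * varId (nuSite β d U a) :=
  statement12_general hd hβ hUcont hA hA0 hV hC₁ hV''

end
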